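/- Let α be a homogeneous polynomial of degree 6 in the polynomial ring ℤ[h₁, h₂]. Then the following are equivalent: (i) there exists a homogeneous polynomial β of degree 5 in ℤ[h₁, h₂] with α = (h₁ + h₂)·β; (ii) the product (∑_{i=0}^{6} (−1)^i h₁^i h₂^{6−i})·α lies in the ideal of ℤ[h₁, h₂] generated by h₁^7 and h₂^7. -/

import Mathlib

/-!
Write `S = ∑ (-1)^i h₁^i h₂^(n-i)` for even `n`. Then `S * (h₁ + h₂) = h₁^(n+1) + h₂^(n+1)`, which
gives (i) ⇒ (ii). Conversely, since `h₂ ≡ -h₁` modulo `h₁ + h₂`, every form of degree `n` is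
`(h₁ + h₂) * β + c * h₁^n` with `β` a form of degree `n - 1`, and `S * h₁^n ≡ h₁^n h₂^n` modulo
`h₁^(n+1)`. Hence (ii) puts `c * h₁^n h₂^n` into the monomial ideal `(h₁^(n+1), h₂^(n+1))`, which
forces `c = 0`.
-/

open MvPolynomial Finset

section AlternatingGeomSum

variable {R : Type*} [CommRing R]

theorem alternating_geom_sum₂_mul_add {n : ℕ} (hn : Even n) (x y : R) :
    (∑ i ∈ range (n + 1), (-1) ^ i * x ^ i * y ^ (n - i)) * (x + y) =
      x ^ (n + 1) + y ^ (n + 1) := by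
  have h := geom_sum₂_mul (-x) y (n + 1)
  simp only [add_tsub_cancel_right, hn.add_one.neg_pow, neg_pow x] at h
  linear_combination -h

theorem alternating_geom_sum₂_eq_sub_mul (n : ℕ) (x y : R) :
    ∑ i ∈ range (n + 1), (-1) ^ i * x ^ i * y ^ (n - i) =
      y ^ n - x * ∑ i ∈ range n, (-1) ^ i * x ^ i * y ^ (n - 1 - i) := by
  rw [sum_range_succ', mul_sum, sub_eq_neg_add, ← sum_neg_distrib]
  congr 1
  · refine sum_congr rfl fun i _ => ?_
    rw [Nat.sub_sub, add_comm 1 i]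
    ring
  · simp

end AlternatingGeomSum

theorem C_mul_X_pow_mul_X_pow_mem_span_X_pow_succ_iff {R σ : Type*} [CommSemiring R] {i j : σ}
    (hij : i ≠ j) (c : R) (n : ℕ) :
    C c * X i ^ n * X j ^ n ∈ Ideal.span {X i ^ (n + 1), X j ^ (n + 1)} ↔ c = 0 := by
  classical
  have hspan : Ideal.span {X i ^ (n + 1), X j ^ (n + 1)} = Ideal.span
      ((fun s => monomial s (1 : R)) '' {Finsupp.single i (n + 1), Finsupp.single j (n + 1)}) := by
    simp [Set.image_pair, X_pow_eq_monomial]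
  have hmon : C c * X i ^ n * X j ^ n = monomial (Finsupp.single i n + Finsupp.single j n) c := by
    simp [X_pow_eq_monomial, C_mul_monomial, monomial_mul]
  rw [hspan, mem_ideal_span_monomial_image, hmon]
  refine ⟨fun h => ?_, by rintro rfl; simp⟩
  by_contra hc
  obtain ⟨s, hs, hle⟩ := h _ (mem_support_iff.mpr (by rwa [coeff_monomial, if_pos rfl]))
  rcases hs with rfl | rfl
  · simpa [hij] using hle i
  · simpa [hij.symm] using hle j

variable {R : Type*} [CommRing R]

theorem exists_X_pow_mul_X_pow_eq {σ : Type*} (i j : σ) {n : ℕ} (a b : ℕ) (h : a + b = n) :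
    ∃ γ : MvPolynomial σ R, γ.IsHomogeneous (n - 1) ∧
      X i ^ a * X j ^ b = (X i + X j) * γ + C ((-1) ^ b) * X i ^ n := by
  induction b generalizing a with
  | zero => exact ⟨0, isHomogeneous_zero _ _ _, by simp [← h]⟩
  | succ b ih =>
    obtain ⟨γ, hγ, hγeq⟩ := ih (a + 1) (by omega)
    refine ⟨X i ^ a * X j ^ b - γ, ?_, ?_⟩
    · have hdeg : n - 1 = a + b := by omega
      rw [hdeg] at hγ ⊢
      exact ((isHomogeneous_X_pow i a).mul (isHomogeneous_X_pow j b)).sub hγ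
    · rw [pow_succ (-1 : R), map_mul, map_neg, map_one]
      linear_combination -hγeq

theorem MvPolynomial.IsHomogeneous.exists_eq_X_add_X_mul_add_C_mul_X_pow
    {α : MvPolynomial (Fin 2) R} {n : ℕ} (hα : α.IsHomogeneous n) :
    ∃ β c, β.IsHomogeneous (n - 1) ∧ α = (X 0 + X 1) * β + C c * X 0 ^ n := by
  induction hα using IsWeightedHomogeneous.induction_on with
  | zero => exact ⟨0, 0, isHomogeneous_zero _ _ _, by simp⟩
  | add p q _ _ hp hq =>
    obtain ⟨βp, cp, hβp, rfl⟩ := hp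
    obtain ⟨βq, cq, hβq, rfl⟩ := hq
    exact ⟨βp + βq, cp + cq, hβp.add hβq, by rw [map_add]; ring⟩
  | monomial d r hd =>
    have hdeg : d 0 + d 1 = n := by simpa [Finsupp.weight_apply, Finsupp.sum_fintype] using hd
    obtain ⟨γ, hγ, hγeq⟩ := exists_X_pow_mul_X_pow_eq (R := R) (0 : Fin 2) 1 (d 0) (d 1) hdeg
    refine ⟨C r * γ, r * (-1) ^ d 1, hγ.C_mul r, ?_⟩
    rw [monomial_eq, Finsupp.prod_fintype _ _ (by simp), Fin.prod_univ_two, hγeq, map_mul]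
    ring

theorem exists_isHomogeneous_eq_X_add_X_mul_iff_mem_span {n : ℕ} (hn : Even n)
    {α : MvPolynomial (Fin 2) R} (hα : α.IsHomogeneous n) :
    (∃ β, β.IsHomogeneous (n - 1) ∧ α = (X 0 + X 1) * β) ↔
      (∑ i ∈ range (n + 1), (-1) ^ i * X 0 ^ i * X 1 ^ (n - i)) * α ∈
        Ideal.span {X 0 ^ (n + 1), X 1 ^ (n + 1)} := by
  set I : Ideal (MvPolynomial (Fin 2) R) := Ideal.span {X 0 ^ (n + 1), X 1 ^ (n + 1)}
  have hX0 : X 0 ^ (n + 1) ∈ I := Ideal.subset_span (by simp)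
  have hX1 : X 1 ^ (n + 1) ∈ I := Ideal.subset_span (by simp)
  constructor
  · rintro ⟨β, -, rfl⟩
    rw [← mul_assoc, alternating_geom_sum₂_mul_add hn, add_mul]
    exact add_mem (Ideal.mul_mem_right _ _ hX0) (Ideal.mul_mem_right _ _ hX1)
  · obtain ⟨β, c, hβ, rfl⟩ := hα.exists_eq_X_add_X_mul_add_C_mul_X_pow
    intro hmem
    rw [mul_add, ← mul_assoc, alternating_geom_sum₂_mul_add hn,
      alternating_geom_sum₂_eq_sub_mul] at hmem
    set T := ∑ i ∈ range n, (-1 : MvPolynomial (Fin 2) R) ^ i * X 0 ^ i * X 1 ^ (n - 1 - i)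
    have hc : C c * X 0 ^ n * X 1 ^ n ∈ I := by
      convert sub_mem hmem (add_mem (Ideal.mul_mem_right (β - C c * T) _ hX0)
        (Ideal.mul_mem_right β _ hX1)) using 1
      ring
    rw [C_mul_X_pow_mul_X_pow_mem_span_X_pow_succ_iff (by decide)] at hc
    exact ⟨β, hβ, by simp [hc]⟩

/-- Lemma 3.3 (ledivclass): a degree-6 homogeneous class `α` in `ℤ[h₁,h₂]` is of the
form `(h₁+h₂)·β` with `β` homogeneous of degree 5 if and only if
`(∑_{i=0}^{6} (−1)^i h₁^i h₂^{6−i})·α` lies in the ideal `(h₁^7, h₂^7)`. -/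
theorem ledivclass (α : MvPolynomial (Fin 2) ℤ) (hα : α.IsHomogeneous 6) :
    (∃ β : MvPolynomial (Fin 2) ℤ, β.IsHomogeneous 5 ∧ α = (X 0 + X 1) * β) ↔
      (∑ i ∈ Finset.range 7,
          (-1 : MvPolynomial (Fin 2) ℤ) ^ i * (X 0) ^ i * (X 1) ^ (6 - i)) * α ∈
        Ideal.span ({(X 0) ^ 7, (X 1) ^ 7} : Set (MvPolynomial (Fin 2) ℤ)) :=
  exists_isHomogeneous_eq_X_add_X_mul_iff_mem_span (by decide) hα
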